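/- arXiv:1903.05903 — 2 statements merged into one kernel-verified Lean document; each statement's English description precedes it below -/
import Mathlib

section
/- Let x, y : [0,T) → ℝ be differentiable with x(t) ≥ 1 for all t, satisfying x' = −(n-1)x and y' ≥ −2k·x·(1 − x^{−2/(n-1)})^{k-1} − (n-1-2k)·y, where n ≥ 2 and 0 < 2k ≤ n-1. Then the function t ↦ x(t)^{−(n-1-2k)/(n-1)}·[ y(t) − x(t)(1 − x(t)^{−2/(n-1)})^k ] is monotone non-decreasing on [0,T). -/
/-- ODE comparison lemma for the monotonicity of `P_k(t)` along the harmonic mean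
curvature flow: if `x ≥ 1`, `x' = −(n-1)x` and
`y' ≥ −2k·x·(1 − x^{−2/(n-1)})^{k-1} − (n-1-2k)·y`, then
`t ↦ x^{−(n-1-2k)/(n-1)}·[y − x(1 − x^{−2/(n-1)})^k]` is non-decreasing on `[0,T)`. -/
theorem Pk_monotone (n k : ℕ) (T : ℝ) (hn : 2 ≤ n) (hk1 : 0 < 2 * k)
    (hk2 : 2 * k ≤ n - 1) (x y y' : ℝ → ℝ)
    (hx1 : ∀ t ∈ Set.Ico (0 : ℝ) T, 1 ≤ x t)
    (hx : ∀ t ∈ Set.Ico (0 : ℝ) T, HasDerivAt x (-((n : ℝ) - 1) * x t) t)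
    (hy : ∀ t ∈ Set.Ico (0 : ℝ) T, HasDerivAt y (y' t) t)
    (hy' : ∀ t ∈ Set.Ico (0 : ℝ) T,
      -2 * (k : ℝ) * x t * (1 - x t ^ (-(2 : ℝ) / ((n : ℝ) - 1))) ^ (k - 1)
        - ((n : ℝ) - 1 - 2 * (k : ℝ)) * y t ≤ y' t) :
    MonotoneOn (fun t =>
      x t ^ (-(((n : ℝ) - 1 - 2 * (k : ℝ)) / ((n : ℝ) - 1))) *
        (y t - x t * (1 - x t ^ (-(2 : ℝ) / ((n : ℝ) - 1))) ^ k))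
      (Set.Ico (0 : ℝ) T) := by
  set N : ℝ := (n : ℝ) - 1 with hNdef
  set A : ℝ := -((N - 2 * (k : ℝ)) / N) with hAdef
  set p : ℝ := -(2 : ℝ) / N with hpdef
  have hN : (0 : ℝ) < N := by
    have : (2 : ℝ) ≤ (n : ℝ) := by exact_mod_cast hn
    simp only [hNdef]; linarith
  have hkpos : 1 ≤ k := by omega
  set D : ℝ → ℝ := fun t =>
    x t ^ A * ((N - 2 * (k : ℝ)) * y t + y' t
      + 2 * (k : ℝ) * x t * (1 - x t ^ p) ^ (k - 1)) with hDdef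
  have key : ∀ t ∈ Set.Ico (0 : ℝ) T,
      HasDerivAt (fun t => x t ^ A * (y t - x t * (1 - x t ^ p) ^ k)) (D t) t
        ∧ 0 ≤ D t := by
    intro t ht
    have hxt : 0 < x t := lt_of_lt_of_le one_pos (hx1 t ht)
    have hg : HasDerivAt (fun s => x s ^ A) ((N - 2 * (k : ℝ)) * x t ^ A) t := by
      have h := (hx t ht).rpow_const (p := A) (Or.inl hxt.ne')
      convert h using 1
      rw [Real.rpow_sub hxt, Real.rpow_one, hAdef]
      field_simp
    have hw : HasDerivAt (fun s => x s ^ p) (2 * x t ^ p) t := by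
      have h := (hx t ht).rpow_const (p := p) (Or.inl hxt.ne')
      convert h using 1
      rw [Real.rpow_sub hxt, Real.rpow_one, hpdef]
      field_simp
    have hu : HasDerivAt (fun s => 1 - x s ^ p) (-(2 * x t ^ p)) t := hw.const_sub 1
    have hup : HasDerivAt (fun s => (1 - x s ^ p) ^ k)
        ((k : ℝ) * (1 - x t ^ p) ^ (k - 1) * (-(2 * x t ^ p))) t := hu.pow k
    have hh : HasDerivAt (fun s => y s - x s * (1 - x s ^ p) ^ k)
        (y' t - ((-N * x t) * (1 - x t ^ p) ^ k
          + x t * ((k : ℝ) * (1 - x t ^ p) ^ (k - 1) * (-(2 * x t ^ p))))) t :=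
      (hy t ht).sub (((hx t ht)).mul hup)
    have hF := hg.mul hh
    have hpow : (1 - x t ^ p) ^ k = (1 - x t ^ p) ^ (k - 1) * (1 - x t ^ p) := by
      conv_lhs => rw [show k = (k - 1) + 1 from (Nat.succ_pred_eq_of_pos hkpos).symm]
      rw [pow_succ]
    constructor
    · refine hF.congr_deriv ?_
      rw [hDdef]
      simp only
      rw [hpow]
      ring
    · have hb := hy' t ht
      have hxA : 0 ≤ x t ^ A := (Real.rpow_pos_of_pos hxt A).le
      apply mul_nonneg hxA
      have : -2 * (k : ℝ) * x t * (1 - x t ^ p) ^ (k - 1) - (N - 2 * (k : ℝ)) * y t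
          ≤ y' t := hb
      linarith
  have hconv : Convex ℝ (Set.Ico (0 : ℝ) T) := convex_Ico 0 T
  apply monotoneOn_of_deriv_nonneg hconv
  · intro t ht
    exact ((key t ht).1).continuousAt.continuousWithinAt
  · intro t ht
    rw [interior_Ico] at ht
    exact ((key t (Set.Ioo_subset_Ico_self ht)).1).differentiableAt.differentiableWithinAt
  · intro t ht
    rw [interior_Ico] at ht
    have h := key t (Set.Ioo_subset_Ico_self ht)
    rw [h.1.deriv]
    exact h.2
end

section
/- Let x, y : [0,∞) → ℝ be differentiable with y(t) > 0 and x(t) ≥ 1 for all t, satisfying y' = y and x' ≤ x(1 − x^{−2/(n-1)}) for n ≥ 3. Then t ↦ y(t)^{-1}·[ y(t) − x(t)(1 − x(t)^{−2/(n-1)})^{(n-1)/2} ] is monotone non-decreasing. -/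
/-- ODE comparison lemma underlying the monotonicity of `Q(t)` along the inverse
mean curvature flow: if `y > 0`, `x ≥ 1`, `y' = y` and `x' ≤ x(1 − x^{−2/(n-1)})`,
then `t ↦ y⁻¹·[y − x(1 − x^{−2/(n-1)})^{(n-1)/2}]` is non-decreasing on `[0,∞)`. -/
theorem Q_monotone_IMCF (n : ℕ) (hn : 3 ≤ n) (x y x' : ℝ → ℝ)
    (hypos : ∀ t ∈ Set.Ici (0 : ℝ), 0 < y t)
    (hx1 : ∀ t ∈ Set.Ici (0 : ℝ), 1 ≤ x t)
    (hx : ∀ t ∈ Set.Ici (0 : ℝ), HasDerivAt x (x' t) t)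
    (hx' : ∀ t ∈ Set.Ici (0 : ℝ),
      x' t ≤ x t * (1 - x t ^ (-(2 : ℝ) / ((n : ℝ) - 1))))
    (hy : ∀ t ∈ Set.Ici (0 : ℝ), HasDerivAt y (y t) t) :
    MonotoneOn (fun t =>
      (y t)⁻¹ *
        (y t - x t * (1 - x t ^ (-(2 : ℝ) / ((n : ℝ) - 1))) ^ (((n : ℝ) - 1) / 2)))
      (Set.Ici (0 : ℝ)) := by
  have hn3 : (3 : ℝ) ≤ (n : ℝ) := by exact_mod_cast hn
  set c : ℝ := (n : ℝ) - 1 with hcdef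
  have hc2 : (2 : ℝ) ≤ c := by rw [hcdef]; linarith
  have hc0 : (0 : ℝ) < c := by linarith
  set p : ℝ := -(2 : ℝ) / c with hpdef
  set b : ℝ := c / 2 with hbdef
  have hb1 : (1 : ℝ) ≤ b := by rw [hbdef]; linarith
  have hb0 : b ≠ 0 := by intro h; rw [h] at hb1; linarith
  have hp0 : p ≤ 0 := by rw [hpdef]; apply div_nonpos_of_nonpos_of_nonneg <;> linarith
  have hpb : p * b = -1 := by rw [hpdef, hbdef]; field_simp
  -- rewrite the function as a quotient
  have hfun : (fun t => (y t)⁻¹ * (y t - x t * (1 - x t ^ p) ^ b)) =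
      (fun t => (y t - x t * (1 - x t ^ p) ^ b) / y t) := by
    funext t; rw [div_eq_inv_mul]
  rw [hfun]
  -- the key derivative fact
  have key : ∀ t ∈ Set.Ici (0 : ℝ),
      HasDerivAt (fun t => (y t - x t * (1 - x t ^ p) ^ b) / y t)
        ((x t * (1 - x t ^ p) ^ b - x' t * (1 - x t ^ p) ^ (b - 1)) / y t) t ∧
      0 ≤ (x t * (1 - x t ^ p) ^ b - x' t * (1 - x t ^ p) ^ (b - 1)) / y t := by
    intro t ht
    have hxt := hx t ht
    have hyt := hy t ht
    have hx1t := hx1 t ht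
    have hypt := hypos t ht
    have hx't := hx' t ht
    have hxpos : 0 < x t := lt_of_lt_of_le one_pos hx1t
    have hxp_le : x t ^ p ≤ 1 := Real.rpow_le_one_of_one_le_of_nonpos hx1t hp0
    have hs0 : 0 ≤ 1 - x t ^ p := by linarith
    have hS0 : 0 ≤ (1 - x t ^ p) ^ (b - 1) := Real.rpow_nonneg hs0 _
    -- derivative of inner rpow
    have h1 : HasDerivAt (fun u => x u ^ p) (p * x t ^ (p - 1) * x' t) t :=
      (Real.hasDerivAt_rpow_const (Or.inl hxpos.ne')).comp t hxt
    have h2 : HasDerivAt (fun u => 1 - x u ^ p) (-(p * x t ^ (p - 1) * x' t)) t :=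
      h1.const_sub 1
    have h3 : HasDerivAt (fun u => (1 - x u ^ p) ^ b)
        (b * (1 - x t ^ p) ^ (b - 1) * -(p * x t ^ (p - 1) * x' t)) t :=
      (Real.hasDerivAt_rpow_const (Or.inr hb1)).comp t h2
    have h4 : HasDerivAt (fun u => x u * (1 - x u ^ p) ^ b)
        (x' t * (1 - x t ^ p) ^ b +
          x t * (b * (1 - x t ^ p) ^ (b - 1) * -(p * x t ^ (p - 1) * x' t))) t :=
      hxt.mul h3
    -- algebraic identities
    have hA : x t * x t ^ (p - 1) = x t ^ p := by
      rw [Real.rpow_sub_one hxpos.ne']; field_simp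
    have hsb : (1 - x t ^ p) ^ b = (1 - x t ^ p) * (1 - x t ^ p) ^ (b - 1) := by
      rcases eq_or_lt_of_le hs0 with h | h
      · rw [← h, Real.zero_rpow hb0, zero_mul]
      · have h1' := Real.rpow_add h 1 (b - 1)
        rw [Real.rpow_one, show (1 : ℝ) + (b - 1) = b by ring] at h1'
        exact h1'
    have hG'eq : x' t * (1 - x t ^ p) ^ b +
          x t * (b * (1 - x t ^ p) ^ (b - 1) * -(p * x t ^ (p - 1) * x' t)) =
        x' t * (1 - x t ^ p) ^ (b - 1) := by
      rw [hsb]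
      linear_combination (-(b * p * (1 - x t ^ p) ^ (b - 1) * x' t)) * hA +
        (-((1 - x t ^ p) ^ (b - 1) * x' t * x t ^ p)) * hpb
    rw [hG'eq] at h4
    have hnum : HasDerivAt (fun u => y u - x u * (1 - x u ^ p) ^ b)
        (y t - x' t * (1 - x t ^ p) ^ (b - 1)) t := hyt.sub h4
    have hdiv := hnum.div hyt hypt.ne'
    constructor
    · refine hdiv.congr_deriv ?_
      rw [div_eq_div_iff (pow_ne_zero 2 hypt.ne') hypt.ne']
      ring
    · apply div_nonneg _ hypt.le
      have hged : x' t * (1 - x t ^ p) ^ (b - 1) ≤ x t * (1 - x t ^ p) ^ b := by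
        rw [hsb, show x t * ((1 - x t ^ p) * (1 - x t ^ p) ^ (b - 1)) =
          (x t * (1 - x t ^ p)) * (1 - x t ^ p) ^ (b - 1) by ring]
        exact mul_le_mul_of_nonneg_right hx't hS0
      linarith
  -- conclude monotonicity
  apply monotoneOn_of_deriv_nonneg (convex_Ici 0)
  · intro t ht
    exact ((key t ht).1).continuousAt.continuousWithinAt
  · intro t ht
    rw [interior_Ici] at ht
    exact ((key t (Set.mem_Ici.mpr (le_of_lt ht))).1).differentiableAt.differentiableWithinAt
  · intro t ht
    rw [interior_Ici] at ht
    rw [((key t (Set.mem_Ici.mpr (le_of_lt ht))).1).deriv]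
    exact (key t (Set.mem_Ici.mpr (le_of_lt ht))).2
end
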